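/- Let c ∈ [2.4048, 2.4049] satisfy J₀(c) = 0. Then c·J₁(c) > 0 and 1/(c·J₁(c)) ≤ 0.801. -/

import Mathlib

/-- The Bessel function of the first kind of integer order `ν ≥ 0`, defined by its
everywhere-convergent power series. -/
noncomputable def besselJ (ν : ℕ) (x : ℝ) : ℝ :=
  ∑' k : ℕ, (-1 : ℝ) ^ k * (x / 2) ^ (2 * k + ν) /
    ((Nat.factorial k : ℝ) * (Nat.factorial (k + ν) : ℝ))

/-!
Only the first six terms of the series are needed. For `0 ≤ x ≤ 2√2` the moduli of the terms of
`J₁(x)` decrease, so an even number of terms bounds the alternating series from below; this makes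
`c·J₁(c) ≥ P((c/2)²)` for an explicit polynomial `P`. The interval `[2.4048, 2.4049]` sits next to a
maximum of `c·J₁(c)` (whose derivative is `c·J₀(c)`), so first-order bounds on `P` are too coarse,
but `P` is concave there and its values at the two endpoints exceed `1/0.801` by about `10⁻⁵`.
-/

open Finset Nat

noncomputable def besselJTerm (ν : ℕ) (x : ℝ) (k : ℕ) : ℝ :=
  (x / 2) ^ (2 * k + ν) / ((k ! : ℝ) * ((k + ν)! : ℝ))

section besselJTerm

variable (ν : ℕ) (x : ℝ)

theorem besselJ_eq_tsum : besselJ ν x = ∑' k, (-1) ^ k * besselJTerm ν x k := by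
  simp only [besselJ, besselJTerm, mul_div_assoc]

theorem summable_besselJTerm : Summable (besselJTerm ν x) := by
  refine ((Real.summable_pow_div_factorial ((x / 2) ^ 2)).mul_left (|x / 2| ^ ν)).of_norm_bounded
    fun k => ?_
  have hk : (0 : ℝ) < k ! := mod_cast k.factorial_pos
  have hkν : (1 : ℝ) ≤ (k + ν)! := mod_cast (k + ν).factorial_pos
  rw [besselJTerm, norm_div, norm_mul, norm_pow, Real.norm_eq_abs, pow_add, pow_mul, sq_abs,
    Real.norm_natCast, Real.norm_natCast, mul_comm (((x / 2) ^ 2) ^ k), mul_div_assoc]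
  gcongr
  exact le_mul_of_one_le_right hk.le hkν

theorem besselJTerm_succ (k : ℕ) :
    besselJTerm ν x (k + 1) = besselJTerm ν x k * ((x / 2) ^ 2 / ((k + 1) * (k + 1 + ν))) := by
  simp only [besselJTerm, show k + 1 + ν = k + ν + 1 by ring, factorial_succ]
  push_cast
  field_simp
  ring

variable {ν x}

theorem antitone_besselJTerm (hx : 0 ≤ x) (hxν : (x / 2) ^ 2 ≤ ν + 1) :
    Antitone (besselJTerm ν x) := by
  refine antitone_nat_of_succ_le fun k => ?_
  rw [besselJTerm_succ]
  refine mul_le_of_le_one_right (by unfold besselJTerm; positivity) (div_le_one_of_le₀ ?_ ?_)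
  · nlinarith [(k.cast_nonneg : (0 : ℝ) ≤ k)]
  · positivity

theorem sum_range_besselJTerm_le_besselJ (hx : 0 ≤ x) (hxν : (x / 2) ^ 2 ≤ ν + 1) (m : ℕ) :
    ∑ k ∈ range (2 * m), (-1) ^ k * besselJTerm ν x k ≤ besselJ ν x :=
  besselJ_eq_tsum ν x ▸ (antitone_besselJTerm hx hxν).alternating_series_le_tendsto
    (summable_besselJTerm ν x).tendsto_alternating_series_tsum m

end besselJTerm

/-- `x` times the first six terms of the series of `J₁(x)`, as a polynomial in `u = (x/2)²`. -/
noncomputable def besselJOneTrunc (u : ℝ) : ℝ :=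
  2 * u - u ^ 2 + u ^ 3 / 6 - u ^ 4 / 72 + u ^ 5 / 1440 - u ^ 6 / 43200

theorem mul_sum_range_six_besselJTerm_one (x : ℝ) :
    x * ∑ k ∈ range 6, (-1) ^ k * besselJTerm 1 x k = besselJOneTrunc ((x / 2) ^ 2) := by
  simp only [sum_range_succ, sum_range_zero, besselJTerm, besselJOneTrunc]
  norm_num [factorial]
  ring

theorem concaveOn_besselJOneTrunc : ConcaveOn ℝ (Set.Icc 0 (3 / 2)) besselJOneTrunc := by
  have hd1 (u : ℝ) : HasDerivAt besselJOneTrunc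
      (2 - 2 * u + u ^ 2 / 2 - u ^ 3 / 18 + u ^ 4 / 288 - u ^ 5 / 7200) u := by
    refine ((((((hasDerivAt_id u).const_mul 2).sub (hasDerivAt_pow 2 u)).add
      ((hasDerivAt_pow 3 u).div_const 6)).sub ((hasDerivAt_pow 4 u).div_const 72)).add
      ((hasDerivAt_pow 5 u).div_const 1440)).sub ((hasDerivAt_pow 6 u).div_const 43200)
      |>.congr_deriv ?_
    norm_num
    ring
  have hd2 (u : ℝ) : HasDerivAt
      (fun u : ℝ => 2 - 2 * u + u ^ 2 / 2 - u ^ 3 / 18 + u ^ 4 / 288 - u ^ 5 / 7200)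
      (-2 + u - u ^ 2 / 6 + u ^ 3 / 72 - u ^ 4 / 1440) u := by
    refine ((((((hasDerivAt_const u (2 : ℝ)).sub ((hasDerivAt_id u).const_mul 2)).add
      ((hasDerivAt_pow 2 u).div_const 2)).sub ((hasDerivAt_pow 3 u).div_const 18)).add
      ((hasDerivAt_pow 4 u).div_const 288)).sub ((hasDerivAt_pow 5 u).div_const 7200))
      |>.congr_deriv ?_
    norm_num
    ring
  refine concaveOn_of_hasDerivWithinAt2_nonpos (convex_Icc _ _)
    (fun u _ => (hd1 u).continuousAt.continuousWithinAt) (fun u _ => (hd1 u).hasDerivWithinAt)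
    (fun u _ => (hd2 u).hasDerivWithinAt) fun u hu => ?_
  rw [interior_Icc] at hu
  obtain ⟨h0, h32⟩ := hu
  nlinarith [pow_le_pow_left₀ h0.le h32.le 3, pow_nonneg h0.le 4]

theorem besselJ_a0_bound_general (c : ℝ) (hc : c ∈ Set.Icc (2.4048 : ℝ) 2.4049) :
    0 < c * besselJ 1 c ∧ 1 / (c * besselJ 1 c) ≤ 0.801 := by
  obtain ⟨hlo, hhi⟩ := hc
  have hc0 : 0 ≤ c := by linarith
  have hu : (c / 2) ^ 2 ∈ segment ℝ ((2.4048 / 2 : ℝ) ^ 2) ((2.4049 / 2) ^ 2) := by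
    rw [segment_eq_Icc (by norm_num)]
    exact ⟨by gcongr, by gcongr⟩
  have hbound : 1 / 0.801 ≤ c * besselJ 1 c :=
    calc (1 / 0.801 : ℝ)
        ≤ min (besselJOneTrunc ((2.4048 / 2) ^ 2)) (besselJOneTrunc ((2.4049 / 2) ^ 2)) := by
          norm_num [besselJOneTrunc]
      _ ≤ besselJOneTrunc ((c / 2) ^ 2) :=
          concaveOn_besselJOneTrunc.ge_on_segment (by norm_num) (by norm_num) hu
      _ = c * ∑ k ∈ range (2 * 3), (-1) ^ k * besselJTerm 1 c k :=
          (mul_sum_range_six_besselJTerm_one c).symm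
      _ ≤ c * besselJ 1 c :=
          mul_le_mul_of_nonneg_left
            (sum_range_besselJTerm_le_besselJ hc0 (by push_cast; nlinarith) 3) hc0
  have hpos : 0 < c * besselJ 1 c := lt_of_lt_of_le (by norm_num) hbound
  exact ⟨hpos, (one_div_le hpos (by norm_num)).mpr hbound⟩

/-- Let `c ∈ [2.4048, 2.4049]` with `J₀(c) = 0`. Then `c·J₁(c) > 0` and
`1/(c·J₁(c)) ≤ 0.801`. -/
theorem besselJ_a0_bound (c : ℝ) (hc : c ∈ Set.Icc (2.4048 : ℝ) 2.4049)
    (hzero : besselJ 0 c = 0) :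
    0 < c * besselJ 1 c ∧ 1 / (c * besselJ 1 c) ≤ 0.801 :=
  besselJ_a0_bound_general c hc
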